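/- Let C_n be the cycle graph on n vertices (n ≥ 5) and let X be the number of crossings of a uniformly random embedding of C_n. Then E[X] = n(n−3)/6. -/

import Mathlib

/-!
A 2-matching `{a, b}, {c, d}` crosses under `π` iff the chords `π a π b` and `π c π d` of the line
cross. Of the three ways to pair up four distinct points exactly one gives crossing chords, and
composing `π` with a transposition of `b` and `c` (or `b` and `d`) permutes the three pairings, so
each 2-matching crosses for a third of all permutations: `E[X] = m₂ / 3`, with `m₂` the number of
2-matchings. Two distinct edges are either disjoint or share exactly one vertex, so
`m₂ = C(|E|, 2) - ∑ᵥ C(deg v, 2)`; for `C_n` this is `C(n, 2) - n = n (n - 3) / 2`.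
-/

open Finset

namespace RandomCrossings

/-- `z` lies strictly between `x` and `y`. -/
def Btw {n : ℕ} (x y z : Fin n) : Prop := min x y < z ∧ z < max x y

instance {n : ℕ} (x y z : Fin n) : Decidable (Btw x y z) :=
  inferInstanceAs (Decidable (_ ∧ _))

/-- The pair of edges `s` forms a crossing under the embedding `π`:
there is a labelling of `s` as `{{a,b},{c,d}}` such that exactly one of
`π c`, `π d` lies strictly between `π a` and `π b`. -/
def IsCrossing {n : ℕ} (π : Equiv.Perm (Fin n)) (s : Finset (Sym2 (Fin n))) : Prop :=
  ∃ a b c d : Fin n,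
    s = {Sym2.mk a b, Sym2.mk c d} ∧
      Xor' (Btw (π a) (π b) (π c)) (Btw (π a) (π b) (π d))

instance {n : ℕ} (π : Equiv.Perm (Fin n)) (s : Finset (Sym2 (Fin n))) :
    Decidable (IsCrossing π s) := by
  unfold IsCrossing Xor'; infer_instance

/-- The set of `r`-matchings of `G`: sets of `r` pairwise vertex-disjoint edges. -/
def matchings {n : ℕ} (G : SimpleGraph (Fin n)) [DecidableRel G.Adj] (r : ℕ) :
    Finset (Finset (Sym2 (Fin n))) :=
  (G.edgeFinset.powersetCard r).filter
    (fun s => ∀ e ∈ s, ∀ f ∈ s, e ≠ f → ∀ v : Fin n, ¬(v ∈ e ∧ v ∈ f))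

/-- `mMatch G r` is the number of `r`-matchings of `G`. -/
def mMatch {n : ℕ} (G : SimpleGraph (Fin n)) [DecidableRel G.Adj] (r : ℕ) : ℕ :=
  (matchings G r).card

/-- The number of crossings of the embedding of `G` given by the permutation `π`. -/
def crossingNumber {n : ℕ} (G : SimpleGraph (Fin n)) [DecidableRel G.Adj]
    (π : Equiv.Perm (Fin n)) : ℕ :=
  ((matchings G 2).filter (fun s => IsCrossing π s)).card

/-- Probability of an event under a uniformly random permutation of `Fin n`. -/
noncomputable def prob {n : ℕ} (p : Equiv.Perm (Fin n) → Prop) : ℝ := by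
  classical
  exact ((Finset.univ.filter p).card : ℝ) / (Fintype.card (Equiv.Perm (Fin n)) : ℝ)

/-- Expectation of a real random variable of a uniformly random permutation of `Fin n`. -/
noncomputable def expect {n : ℕ} (f : Equiv.Perm (Fin n) → ℝ) : ℝ :=
  (∑ π : Equiv.Perm (Fin n), f π) / (Fintype.card (Equiv.Perm (Fin n)) : ℝ)

/-- The mean number of crossings of a uniformly random embedding of `G`. -/
noncomputable def meanX {n : ℕ} (G : SimpleGraph (Fin n)) [DecidableRel G.Adj] : ℝ :=
  expect (fun π => (crossingNumber G π : ℝ))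

/-- The variance of the number of crossings of a uniformly random embedding of `G`. -/
noncomputable def varX {n : ℕ} (G : SimpleGraph (Fin n)) [DecidableRel G.Adj] : ℝ :=
  expect (fun π => ((crossingNumber G π : ℝ) - meanX G) ^ 2)

/-- The standard normal cumulative distribution function. -/
noncomputable def Phi (z : ℝ) : ℝ :=
  ((ProbabilityTheory.gaussianReal 0 1) (Set.Iic z)).toReal

/-- Kolmogorov distance between a random variable of a uniform permutation and
a standard Gaussian. -/
noncomputable def dKol {n : ℕ} (W : Equiv.Perm (Fin n) → ℝ) : ℝ :=
  ⨆ z : ℝ, |prob (fun π => W π ≤ z) - Phi z|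

/-- The cycle graph on `n` vertices, with edges `{i, i+1 mod n}`. -/
def cycleG (n : ℕ) : SimpleGraph (Fin n) where
  Adj v w := v ≠ w ∧ (((v : ℕ) + 1) % n = (w : ℕ) ∨ ((w : ℕ) + 1) % n = (v : ℕ))
  symm := ⟨fun v w h => ⟨h.1.symm, h.2.symm⟩⟩
  loopless := ⟨fun v h => h.1 rfl⟩

instance (n : ℕ) : DecidableRel (cycleG n).Adj :=
  fun _ _ => inferInstanceAs (Decidable (_ ∧ _))

open Equiv

section Crossings

variable {n : ℕ}

def Crosses (x y z w : Fin n) : Prop := Xor (Btw x y z) (Btw x y w)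

instance (x y z w : Fin n) : Decidable (Crosses x y z w) := by
  unfold Crosses Xor; infer_instance

lemma crosses_comm_right (x y z w : Fin n) : Crosses x y w z ↔ Crosses x y z w := by
  rw [Crosses, Crosses, xor_comm]

lemma crosses_congr {x y z w x' y' z' w' : Fin n} (h : [x, y, z, w].Nodup)
    (he : ({s(x', y'), s(z', w')} : Finset (Sym2 (Fin n))) = {s(x, y), s(z, w)}) :
    Crosses x' y' z' w' ↔ Crosses x y z w := by
  replace he := congrArg ((↑) : Finset (Sym2 (Fin n)) → Set (Sym2 (Fin n))) he
  simp only [coe_pair, Set.pair_eq_pair_iff, Sym2.eq_iff] at he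
  simp only [List.nodup_cons, List.mem_cons, List.not_mem_nil] at h
  rcases he with ⟨⟨rfl, rfl⟩ | ⟨rfl, rfl⟩, ⟨rfl, rfl⟩ | ⟨rfl, rfl⟩⟩ |
      ⟨⟨rfl, rfl⟩ | ⟨rfl, rfl⟩, ⟨rfl, rfl⟩ | ⟨rfl, rfl⟩⟩ <;>
    simp only [Crosses, Btw, Xor, min_lt_iff, lt_max_iff, Fin.lt_def, Fin.ext_iff] at h ⊢ <;>
    omega

lemma crosses_trichotomy {x y z w : Fin n} (h : [x, y, z, w].Nodup) :
    Crosses x y z w ∧ ¬Crosses x z y w ∧ ¬Crosses x w y z ∨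
      ¬Crosses x y z w ∧ Crosses x z y w ∧ ¬Crosses x w y z ∨
      ¬Crosses x y z w ∧ ¬Crosses x z y w ∧ Crosses x w y z := by
  simp only [List.nodup_cons, List.mem_cons, List.not_mem_nil] at h
  simp only [Crosses, Btw, Xor, min_lt_iff, lt_max_iff, Fin.lt_def, Fin.ext_iff] at h ⊢
  omega

lemma isCrossing_pair_iff (π : Perm (Fin n)) {a b c d : Fin n} (h : [a, b, c, d].Nodup) :
    IsCrossing π {s(a, b), s(c, d)} ↔ Crosses (π a) (π b) (π c) (π d) := by
  refine ⟨fun ⟨a', b', c', d', hs, hx⟩ => ?_, fun hx => ⟨a, b, c, d, rfl, hx⟩⟩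
  refine (crosses_congr (by simpa using h.map π.injective) ?_).mp hx
  simpa [image_insert, Sym2.map_pair_eq] using congrArg (image (Sym2.map π)) hs.symm

lemma three_mul_card_crosses {a b c d : Fin n} (h : [a, b, c, d].Nodup) :
    3 * #{π : Perm (Fin n) | Crosses (π a) (π b) (π c) (π d)} = Fintype.card (Perm (Fin n)) := by
  have h' := h
  simp only [List.nodup_cons, List.mem_cons, List.not_mem_nil, not_or] at h'
  obtain ⟨⟨hab, hac, had, -⟩, ⟨hbc, hbd, -⟩, ⟨hcd, -⟩, -⟩ := h'
  have hB : #{π : Perm (Fin n) | Crosses (π a) (π c) (π b) (π d)} =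
      #{π : Perm (Fin n) | Crosses (π a) (π b) (π c) (π d)} :=
    card_equiv (Equiv.mulRight (swap b c)) fun π => by
      simp [swap_apply_of_ne_of_ne, hab, hac, Ne.symm hbd, Ne.symm hcd]
  have hC : #{π : Perm (Fin n) | Crosses (π a) (π d) (π b) (π c)} =
      #{π : Perm (Fin n) | Crosses (π a) (π b) (π c) (π d)} :=
    card_equiv (Equiv.mulRight (swap b d)) fun π => by
      simp [swap_apply_of_ne_of_ne, hab, had, Ne.symm hbc, hcd, crosses_comm_right]
  have hsum : #{π : Perm (Fin n) | Crosses (π a) (π b) (π c) (π d)} +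
      #{π : Perm (Fin n) | Crosses (π a) (π c) (π b) (π d)} +
      #{π : Perm (Fin n) | Crosses (π a) (π d) (π b) (π c)} = Fintype.card (Perm (Fin n)) := by
    rw [card_filter, card_filter, card_filter, ← sum_add_distrib, ← sum_add_distrib, ← card_univ,
      card_eq_sum_ones]
    refine sum_congr rfl fun π _ => ?_
    have hπ : [π a, π b, π c, π d].Nodup := by simpa using h.map π.injective
    rcases crosses_trichotomy hπ with ⟨h₁, h₂, h₃⟩ | ⟨h₁, h₂, h₃⟩ | ⟨h₁, h₂, h₃⟩ <;>
      simp [h₁, h₂, h₃]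
  omega

end Crossings

section Matchings

open SimpleGraph

variable {n : ℕ} (G : SimpleGraph (Fin n)) [DecidableRel G.Adj]

lemma exists_nodup_eq_pair_of_mem_matchings_two {s : Finset (Sym2 (Fin n))}
    (hs : s ∈ matchings G 2) : ∃ a b c d, [a, b, c, d].Nodup ∧ s = {s(a, b), s(c, d)} := by
  simp only [matchings, mem_filter, mem_powersetCard, card_eq_two] at hs
  obtain ⟨⟨hsub, e, f, hef, rfl⟩, hdisj⟩ := hs
  induction e with | h a b => ?_
  induction f with | h c d => ?_
  have hab : a ≠ b := G.ne_of_adj (by simpa using hsub (mem_insert_self _ _))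
  have hcd : c ≠ d := G.ne_of_adj (by simpa using hsub (mem_insert_of_mem (mem_singleton_self _)))
  have hdisj' := hdisj _ (mem_insert_self _ _) _ (mem_insert_of_mem (mem_singleton_self _)) hef
  refine ⟨a, b, c, d, ?_, rfl⟩
  have ha := hdisj' a
  have hb := hdisj' b
  simp_all

lemma three_mul_card_isCrossing {s : Finset (Sym2 (Fin n))} (hs : s ∈ matchings G 2) :
    3 * #{π : Perm (Fin n) | IsCrossing π s} = Fintype.card (Perm (Fin n)) := by
  obtain ⟨a, b, c, d, h, rfl⟩ := exists_nodup_eq_pair_of_mem_matchings_two G hs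
  simpa only [isCrossing_pair_iff _ h] using three_mul_card_crosses h

theorem meanX_eq_mMatch_div_three : meanX G = mMatch G 2 / 3 := by
  have hcount : ∀ s ∈ matchings G 2,
      (#{π : Perm (Fin n) | IsCrossing π s} : ℝ) = Fintype.card (Perm (Fin n)) / 3 := by
    intro s hs
    rw [eq_div_iff three_ne_zero, mul_comm]
    exact_mod_cast three_mul_card_isCrossing G hs
  have hswap : ∑ π, (crossingNumber G π : ℝ) =
      ∑ s ∈ matchings G 2, (#{π : Perm (Fin n) | IsCrossing π s} : ℝ) := by
    simp only [crossingNumber, card_filter]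
    push_cast
    exact sum_comm
  rw [meanX, expect, hswap, sum_congr rfl hcount, sum_const, nsmul_eq_mul, mMatch]
  field_simp

lemma filter_not_disjoint_powersetCard_two :
    (G.edgeFinset.powersetCard 2).filter
        (fun s => ¬∀ e ∈ s, ∀ f ∈ s, e ≠ f → ∀ v : Fin n, ¬(v ∈ e ∧ v ∈ f)) =
      univ.biUnion fun v => (G.incidenceFinset v).powersetCard 2 := by
  ext s
  simp only [mem_filter, mem_powersetCard, mem_biUnion, mem_univ, true_and, card_eq_two]
  constructor
  · rintro ⟨⟨hsub, e, f, hef, rfl⟩, hshare⟩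
    simp only [not_forall, not_not, exists_prop] at hshare
    obtain ⟨e', he', f', hf', hne, v, hve, hvf⟩ := hshare
    have hv : ∀ x ∈ ({e, f} : Finset (Sym2 (Fin n))), v ∈ x := by
      simp only [mem_insert, mem_singleton] at he' hf'
      rcases he' with rfl | rfl <;> rcases hf' with rfl | rfl <;> simp_all
    exact ⟨v, fun x hx => (G.mem_incidenceFinset _ _).mpr ⟨mem_edgeFinset.mp (hsub hx), hv x hx⟩,
      e, f, hef, rfl⟩
  · rintro ⟨v, hsub, e, f, hef, rfl⟩
    have hv := fun x hx => (G.mem_incidenceFinset v x).mp (hsub hx)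
    exact ⟨⟨hsub.trans (G.incidenceFinset_subset v), e, f, hef, rfl⟩,
      fun h => h e (by simp) f (by simp) hef v ⟨(hv e (by simp)).2, (hv f (by simp)).2⟩⟩

/-- Two distinct edges share at most one vertex. -/
lemma pairwiseDisjoint_powersetCard_two_incidenceFinset :
    ((univ : Finset (Fin n)) : Set (Fin n)).PairwiseDisjoint
      fun v => (G.incidenceFinset v).powersetCard 2 := by
  intro v _ w _ hvw
  refine disjoint_left.mpr fun s hv hw => ?_
  rw [mem_powersetCard, card_eq_two] at hv hw
  obtain ⟨hsv, e, f, hef, rfl⟩ := hv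
  obtain ⟨hsw, -⟩ := hw
  have hin : ∀ x ∈ ({e, f} : Finset (Sym2 (Fin n))), x = s(v, w) := fun x hx =>
    (Sym2.mem_and_mem_iff hvw).mp ⟨(G.mem_incidenceFinset _ _).mp (hsv hx) |>.2,
      (G.mem_incidenceFinset _ _).mp (hsw hx) |>.2⟩
  exact hef ((hin e (by simp)).trans (hin f (by simp)).symm)

theorem mMatch_two_add_sum_choose_degree :
    mMatch G 2 + ∑ v, (G.degree v).choose 2 = (#G.edgeFinset).choose 2 := by
  rw [← card_powersetCard, mMatch, matchings,
    ← card_filter_add_card_filter_not (s := G.edgeFinset.powersetCard 2)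
      (fun s => ∀ e ∈ s, ∀ f ∈ s, e ≠ f → ∀ v : Fin n, ¬(v ∈ e ∧ v ∈ f)),
    filter_not_disjoint_powersetCard_two,
    card_biUnion (pairwiseDisjoint_powersetCard_two_incidenceFinset G)]
  simp [card_incidenceFinset_eq_degree]

end Matchings

section Cycle

open SimpleGraph

theorem cycleG_eq_cycleGraph (n : ℕ) : cycleG n = cycleGraph n := by
  match n with
  | 0 | 1 => exact Subsingleton.elim _ _
  | m + 2 =>
    ext v w
    have hmod : ∀ x y : Fin (m + 2), ((x : ℕ) + 1) % (m + 2) = y ↔ x + 1 = y := by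
      simp [Fin.ext_iff, Fin.val_add]
    have hne : ∀ x : Fin (m + 2), x + 1 ≠ x := by simp
    simp only [cycleG, cycleGraph_adj, hmod, sub_eq_iff_eq_add']
    constructor
    · rintro ⟨-, h | h⟩
      exacts [Or.inr h.symm, Or.inl h.symm]
    · rintro (rfl | rfl)
      exacts [⟨hne w, Or.inr rfl⟩, ⟨(hne v).symm, Or.inl rfl⟩]

lemma degree_cycleG {n : ℕ} (hn : 3 ≤ n) (v : Fin n) : (cycleG n).degree v = 2 := by
  obtain ⟨m, rfl⟩ : ∃ m, n = m + 3 := ⟨n - 3, by omega⟩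
  convert cycleGraph_degree_three_le (v := v)
  exact cycleG_eq_cycleGraph _

theorem mMatch_cycleG_two {n : ℕ} (hn : 3 ≤ n) :
    (mMatch (cycleG n) 2 : ℝ) = n * (n - 3) / 2 := by
  have hE : #(cycleG n).edgeFinset = n := by
    have := (cycleG n).sum_degrees_eq_twice_card_edges
    simp [degree_cycleG hn] at this
    omega
  have h := mMatch_two_add_sum_choose_degree (cycleG n)
  simp only [degree_cycleG hn, hE, Nat.choose_self, sum_const, card_univ, Fintype.card_fin,
    smul_eq_mul, mul_one] at h
  have hR : (mMatch (cycleG n) 2 : ℝ) + n = (n.choose 2 : ℕ) := by exact_mod_cast h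
  rw [Nat.cast_choose_two] at hR
  linarith

end Cycle

/-- Mean number of crossings of a random embedding of the cycle graph. -/
theorem mean_crossings_cycle (n : ℕ) (hn : 5 ≤ n) :
    meanX (cycleG n) = (n : ℝ) * ((n : ℝ) - 3) / 6 := by
  rw [meanX_eq_mMatch_div_three, mMatch_cycleG_two (by omega)]
  ring

end RandomCrossings
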